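/- arXiv:1909.10844 — 2 statements merged into one kernel-verified Lean document; each statement's English description precedes it below -/
import Mathlib

section
/- For every integer n ≥ 3, B_{2^n − 5}(t) = t·\sum_{i=0}^{n−4} t^i + (t+1)·\sum_{i=0}^{n−3} t^i in ℤ[t] (the first sum being empty when n = 3). -/
open Polynomial

/-- The Stern polynomials: `B 0 = 0`, `B 1 = 1`, `B (2n) = t * B n`,
`B (2n+1) = B n + B (n+1)`. -/
noncomputable def sternPoly : ℕ → Polynomial ℤ
  | 0 => 0
  | 1 => 1
  | n + 2 =>
    if h : (n + 2) % 2 = 0 then X * sternPoly ((n + 2) / 2)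
    else sternPoly ((n + 2) / 2) + sternPoly ((n + 2) / 2 + 1)
decreasing_by all_goals omega

lemma stern_even (n : ℕ) : sternPoly (2 * n) = X * sternPoly n := by
  match n with
  | 0 => simp [sternPoly]
  | n + 1 =>
    rw [show 2 * (n + 1) = 2 * n + 2 by ring, sternPoly]
    rw [dif_pos (by omega)]
    have h : (2 * n + 2) / 2 = n + 1 := by omega
    rw [h]

lemma stern_odd (n : ℕ) : sternPoly (2 * n + 1) = sternPoly n + sternPoly (n + 1) := by
  match n with
  | 0 => simp [sternPoly]
  | n + 1 =>
    rw [show 2 * (n + 1) + 1 = (2 * n + 1) + 2 by ring, sternPoly]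
    rw [dif_neg (by omega)]
    have h : (2 * n + 1 + 2) / 2 = n + 1 := by omega
    rw [h]

lemma stern_two_pow (k : ℕ) : sternPoly (2 ^ k) = X ^ k := by
  induction k with
  | zero => simp [sternPoly]
  | succ k ih =>
    rw [pow_succ, mul_comm, stern_even, ih, pow_succ, mul_comm]

lemma stern_two_pow_sub_one (k : ℕ) :
    sternPoly (2 ^ k - 1) = ∑ i ∈ Finset.range k, (X : Polynomial ℤ) ^ i := by
  induction k with
  | zero => simp [sternPoly]
  | succ k ih =>
    have h : 2 ^ (k + 1) - 1 = 2 * (2 ^ k - 1) + 1 := by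
      have : 1 ≤ 2 ^ k := Nat.one_le_two_pow
      omega
    have h2 : 2 ^ k - 1 + 1 = 2 ^ k := by
      have : 1 ≤ 2 ^ k := Nat.one_le_two_pow
      omega
    rw [h, stern_odd, ih, h2, stern_two_pow, Finset.sum_range_succ]

lemma stern_two_pow_sub_two (k : ℕ) (hk : 1 ≤ k) :
    sternPoly (2 ^ k - 2) = X * ∑ i ∈ Finset.range (k - 1), (X : Polynomial ℤ) ^ i := by
  have h : 2 ^ k - 2 = 2 * (2 ^ (k - 1) - 1) := by
    have h1 : 2 ^ k = 2 * 2 ^ (k - 1) := by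
      rw [← pow_succ']
      congr 1
      omega
    have : 1 ≤ 2 ^ (k - 1) := Nat.one_le_two_pow
    omega
  rw [h, stern_even, stern_two_pow_sub_one]

lemma stern_two_pow_sub_three (k : ℕ) (hk : 2 ≤ k) :
    sternPoly (2 ^ k - 3) = X * ∑ i ∈ Finset.range (k - 2), (X : Polynomial ℤ) ^ i
      + ∑ i ∈ Finset.range (k - 1), (X : Polynomial ℤ) ^ i := by
  have h2k : 2 ≤ 2 ^ (k - 1) := by
    calc 2 = 2 ^ 1 := rfl
    _ ≤ 2 ^ (k - 1) := Nat.pow_le_pow_right (by norm_num) (by omega)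
  have h : 2 ^ k - 3 = 2 * (2 ^ (k - 1) - 2) + 1 := by
    have h1 : 2 ^ k = 2 * 2 ^ (k - 1) := by
      rw [← pow_succ']
      congr 1
      omega
    omega
  have h2 : 2 ^ (k - 1) - 2 + 1 = 2 ^ (k - 1) - 1 := by omega
  rw [h, stern_odd, h2, stern_two_pow_sub_two (k - 1) (by omega),
    stern_two_pow_sub_one, show k - 1 - 1 = k - 2 by omega]

theorem stern_two_pow_sub_five (n : ℕ) (hn : 3 ≤ n) :
    sternPoly (2 ^ n - 5) =
      X * ∑ i ∈ Finset.range (n - 3), (X : Polynomial ℤ) ^ i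
        + (X + 1) * ∑ i ∈ Finset.range (n - 2), (X : Polynomial ℤ) ^ i := by
  have h4 : 4 ≤ 2 ^ (n - 1) := by
    calc 4 = 2 ^ 2 := rfl
    _ ≤ 2 ^ (n - 1) := Nat.pow_le_pow_right (by norm_num) (by omega)
  have h : 2 ^ n - 5 = 2 * (2 ^ (n - 1) - 3) + 1 := by
    have h1 : 2 ^ n = 2 * 2 ^ (n - 1) := by
      rw [← pow_succ']
      congr 1
      omega
    omega
  have h2 : 2 ^ (n - 1) - 3 + 1 = 2 ^ (n - 1) - 2 := by omega
  rw [h, stern_odd, h2, stern_two_pow_sub_three (n - 1) (by omega),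
    stern_two_pow_sub_two (n - 1) (by omega),
    show n - 1 - 2 = n - 3 by omega, show n - 1 - 1 = n - 2 by omega]
  ring
end

section
/- One has B_{p_{3,1}}(t) = 1 + 2t + 2t^2, and for every integer n ≥ 2, B_{p_{3,n}}(t) = 1 + 6t + 2\sum_{i=2}^{n−1}(3i+1)t^i + 2(3n−1)t^n + 2(3n−4)t^{n+1} + 2t^n\sum_{i=2}^{n−1}(3n−3i−2)t^i in ℤ[t] (the sums over i from 2 to n−1 being empty when n = 2). -/
open Polynomial

/-- `p k n = 2^(2n+k) - 3·2^(n+k-1) + 2^k - 3`. -/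
def pSeq (k n : ℕ) : ℕ := 2 ^ (2 * n + k) - 3 * 2 ^ (n + k - 1) + 2 ^ k - 3

lemma sternPoly_even (m : ℕ) (hm : 1 ≤ m) : sternPoly (2 * m) = X * sternPoly m := by
  obtain ⟨k, rfl⟩ : ∃ k, m = k + 1 := ⟨m - 1, by omega⟩
  show sternPoly (2 * k + 2) = _
  rw [sternPoly]
  have h1 : (2 * k + 2) % 2 = 0 := by omega
  have h2 : (2 * k + 2) / 2 = k + 1 := by omega
  simp [h1, h2]

lemma sternPoly_odd (m : ℕ) (hm : 1 ≤ m) :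
    sternPoly (2 * m + 1) = sternPoly m + sternPoly (m + 1) := by
  obtain ⟨k, rfl⟩ : ∃ k, m = k + 1 := ⟨m - 1, by omega⟩
  show sternPoly (2 * k + 1 + 2) = _
  rw [sternPoly]
  have h1 : (2 * k + 1 + 2) % 2 = 1 := by omega
  have h2 : (2 * k + 1 + 2) / 2 = k + 1 := by omega
  simp [h1, h2]

lemma sternPoly_mul_pow (c k : ℕ) (hc : 1 ≤ c) :
    sternPoly (c * 2 ^ k) = X ^ k * sternPoly c := by
  induction k with
  | zero => simp
  | succ k ih =>
    have h : c * 2 ^ (k + 1) = 2 * (c * 2 ^ k) := by ring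
    rw [h, sternPoly_even _ (Nat.one_le_iff_ne_zero.mpr (by positivity)), ih]
    ring

lemma sternPoly_geom (k : ℕ) (hk : 1 ≤ k) :
    sternPoly (2 ^ k - 1) = ∑ i ∈ Finset.range k, X ^ i := by
  induction k with
  | zero => omega
  | succ k ih =>
    rcases Nat.eq_or_lt_of_le hk with h | h
    · obtain rfl : k = 0 := by omega
      norm_num [sternPoly]
    · have hk1 : 1 ≤ k := by omega
      have h2 : (2:ℕ) ^ k ≥ 2 := by
        calc (2:ℕ)^k ≥ 2^1 := Nat.pow_le_pow_right (by norm_num) hk1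
        _ = 2 := by norm_num
      have he : 2 ^ (k + 1) - 1 = 2 * (2 ^ k - 1) + 1 := by
        have : (2:ℕ)^(k+1) = 2 * 2^k := by ring
        omega
      rw [he, sternPoly_odd _ (by omega), ih hk1]
      have he2 : 2 ^ k - 1 + 1 = 2 ^ k := by omega
      have he3 : (2:ℕ) ^ k = 1 * 2 ^ k := by ring
      rw [he2, he3, sternPoly_mul_pow 1 k le_rfl]
      rw [Finset.sum_range_succ]
      simp [sternPoly]

lemma sternPoly_mul_pow_add_one (c k : ℕ) (hc : 1 ≤ c) :
    sternPoly (c * 2 ^ k + 1)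
      = (∑ i ∈ Finset.range k, X ^ i) * sternPoly c + sternPoly (c + 1) := by
  induction k with
  | zero => simp
  | succ k ih =>
    have h : c * 2 ^ (k + 1) + 1 = 2 * (c * 2 ^ k) + 1 := by ring
    rw [h, sternPoly_odd _ (Nat.one_le_iff_ne_zero.mpr (by positivity)), sternPoly_mul_pow c k hc, ih,
      Finset.sum_range_succ]
    ring

lemma sumG (m : ℕ) :
    ((X : ℤ[X]) - 1) * ∑ i ∈ Finset.Icc 2 (m + 1), X ^ i = X ^ (m + 2) - X ^ 2 := by
  induction m with
  | zero => simp
  | succ m ih =>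
    rw [Finset.sum_Icc_succ_top (by omega), mul_add, ih]
    ring

lemma sumA (m : ℕ) :
    ((X : ℤ[X]) - 1) ^ 2 * ∑ i ∈ Finset.Icc 2 (m + 1), C (3 * (i : ℤ) + 1) * X ^ i
      = C (3 * (m : ℤ) + 4) * X ^ (m + 3) - C (3 * (m : ℤ) + 7) * X ^ (m + 2)
        - 4 * X ^ 3 + 7 * X ^ 2 := by
  induction m with
  | zero =>
    simp only [Finset.Icc_self, Finset.sum_singleton, Nat.cast_zero]
    norm_num
  | succ m ih =>
    rw [Finset.sum_Icc_succ_top (by omega), mul_add, ih]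
    push_cast
    simp only [map_mul, map_add, map_sub, map_one, map_ofNat, map_natCast]
    ring

lemma sumD (m : ℕ) :
    ((X : ℤ[X]) - 1) ^ 2
        * ∑ i ∈ Finset.Icc 2 (m + 1), C (3 * ((m : ℤ) + 2) - 3 * (i : ℤ) - 2) * X ^ i
      = X ^ (m + 3) + 2 * X ^ (m + 2) - C (3 * (m : ℤ) + 1) * X ^ 3
        + C (3 * (m : ℤ) - 2) * X ^ 2 := by
  induction m with
  | zero =>
    simp only [Finset.Icc_self, Finset.sum_singleton, Nat.cast_zero]
    norm_num
  | succ m ih =>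
    have hsplit :
        ∑ i ∈ Finset.Icc 2 (m + 1), C (3 * (((m : ℤ) + 1) + 2) - 3 * (i : ℤ) - 2) * X ^ i
          = (∑ i ∈ Finset.Icc 2 (m + 1), C (3 * ((m : ℤ) + 2) - 3 * (i : ℤ) - 2) * X ^ i)
            + 3 * ∑ i ∈ Finset.Icc 2 (m + 1), X ^ i := by
      rw [Finset.mul_sum, ← Finset.sum_add_distrib]
      refine Finset.sum_congr rfl fun i _ => ?_
      have h : (3 * (((m : ℤ) + 1) + 2) - 3 * (i : ℤ) - 2)
          = (3 * ((m : ℤ) + 2) - 3 * (i : ℤ) - 2) + 3 := by ring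
      rw [h, map_add]
      simp only [map_ofNat]
      ring
    rw [Finset.sum_Icc_succ_top (by omega)]
    push_cast
    rw [hsplit]
    have hg := sumG m
    simp only [map_mul, map_add, map_sub, map_one, map_ofNat, map_natCast] at ih ⊢
    linear_combination ih + (3 * ((X:ℤ[X]) - 1)) * hg

theorem stern_p_three_explicit :
    sternPoly (pSeq 3 1) = 1 + 2 * X + 2 * X ^ 2 ∧
      ∀ n : ℕ, 2 ≤ n →
        sternPoly (pSeq 3 n) =
          1 + 6 * X + 2 * ∑ i ∈ Finset.Icc 2 (n - 1), C (3 * (i : ℤ) + 1) * X ^ i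
            + C (2 * (3 * (n : ℤ) - 1)) * X ^ n
            + C (2 * (3 * (n : ℤ) - 4)) * X ^ (n + 1)
            + 2 * X ^ n * ∑ i ∈ Finset.Icc 2 (n - 1), C (3 * (n : ℤ) - 3 * i - 2) * X ^ i := by
  have b1 : sternPoly 1 = 1 := by rw [sternPoly]
  have b2 : sternPoly 2 = X := by
    rw [show (2:ℕ) = 2 * 1 from rfl, sternPoly_even 1 le_rfl, b1, mul_one]
  have b3 : sternPoly 3 = 1 + X := by
    rw [show (3:ℕ) = 2 * 1 + 1 from rfl, sternPoly_odd 1 le_rfl, b1, show (1+1:ℕ) = 2 from rfl, b2]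
  constructor
  · have h13 : pSeq 3 1 = 13 := by norm_num [pSeq]
    have b4 : sternPoly 4 = X ^ 2 := by
      rw [show (4:ℕ) = 2 * 2 from rfl, sternPoly_even 2 (by norm_num), b2]; ring
    have b6 : sternPoly 6 = X * (1 + X) := by
      rw [show (6:ℕ) = 2 * 3 from rfl, sternPoly_even 3 (by norm_num), b3]
    have b7 : sternPoly 7 = 1 + X + X ^ 2 := by
      rw [show (7:ℕ) = 2 * 3 + 1 from rfl, sternPoly_odd 3 (by norm_num), b3,
        show (3+1:ℕ) = 4 from rfl, b4]
    rw [h13, show (13:ℕ) = 2 * 6 + 1 from rfl, sternPoly_odd 6 (by norm_num), b6,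
      show (6+1:ℕ) = 7 from rfl, b7]
    ring
  · intro n hn
    obtain ⟨m, rfl⟩ : ∃ m, n = m + 2 := ⟨n - 2, by omega⟩
    -- arithmetic facts
    have ha1 : 1 ≤ (2:ℕ) ^ (m + 1) := Nat.one_le_two_pow
    have e3 : (2:ℕ) ^ (m + 3) = 4 * 2 ^ (m + 1) := by
      rw [show m + 3 = (m + 1) + 2 from by omega, pow_add]; ring
    have e2 : (2:ℕ) ^ (m + 2) = 2 * 2 ^ (m + 1) := by
      rw [show m + 2 = (m + 1) + 1 from by omega, pow_add]; ring
    set M : ℕ := 2 ^ (m + 3) - 3 with hM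
    set q : ℕ := M * 2 ^ (m + 1) with hq
    have hM1 : 1 ≤ M := by omega
    have hq1 : 1 ≤ q := Nat.one_le_iff_ne_zero.mpr (by positivity)
    have hp : pSeq 3 (m + 2) = 8 * q + 5 := by
      rw [hq, hM]
      unfold pSeq
      have e1 : (2:ℕ) ^ (2 * (m + 2) + 3) = 32 * (2 ^ (m + 1) * 2 ^ (m + 1)) := by
        rw [show 2 * (m + 2) + 3 = (m + 1) + ((m + 1) + 5) from by omega, pow_add, pow_add]
        ring
      have e4 : (2:ℕ) ^ (m + 2 + 3 - 1) = 8 * 2 ^ (m + 1) := by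
        rw [show m + 2 + 3 - 1 = (m + 1) + 3 from by omega, pow_add]; ring
      rw [e1, e4, Nat.sub_mul, e3]
      have e5 : 4 * 2 ^ (m + 1) * 2 ^ (m + 1) = 4 * (2 ^ (m + 1) * 2 ^ (m + 1)) := by ring
      rw [e5]
      have hle : (2:ℕ) ^ (m + 1) ≤ 2 ^ (m + 1) * 2 ^ (m + 1) :=
        Nat.le_mul_of_pos_left _ (by positivity)
      generalize hb : 2 ^ (m + 1) * 2 ^ (m + 1) = b at hle ⊢
      omega
    -- Stern polynomial values
    have Sgeom1 := sternPoly_geom (m + 1) (by omega)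
    have Sgeom2 := sternPoly_geom (m + 2) (by omega)
    have hBm : sternPoly M = X * (∑ i ∈ Finset.range (m + 1), X ^ i)
        + ∑ i ∈ Finset.range (m + 2), X ^ i := by
      rw [show M = 2 * (2 ^ (m + 2) - 2) + 1 from by omega,
        sternPoly_odd _ (by omega),
        show 2 ^ (m + 2) - 2 = 2 * (2 ^ (m + 1) - 1) from by omega,
        sternPoly_even _ (by omega), Sgeom1,
        show 2 * (2 ^ (m + 1) - 1) + 1 = 2 ^ (m + 2) - 1 from by omega, Sgeom2]
    have hBm1 : sternPoly (M + 1) = X * ∑ i ∈ Finset.range (m + 2), X ^ i := by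
      rw [show M + 1 = 2 * (2 ^ (m + 2) - 1) from by omega,
        sternPoly_even _ (by omega), Sgeom2]
    have hBq : sternPoly q = X ^ (m + 1) * sternPoly M := sternPoly_mul_pow M (m+1) hM1
    have hBq1 : sternPoly (q + 1)
        = (∑ i ∈ Finset.range (m + 1), X ^ i) * sternPoly M + sternPoly (M + 1) :=
      sternPoly_mul_pow_add_one M (m + 1) hM1
    have h2q1 : sternPoly (2 * q + 1) = sternPoly q + sternPoly (q + 1) :=
      sternPoly_odd q hq1
    have hfin : sternPoly (8 * q + 5)
        = (1 + X) * (sternPoly q + sternPoly (q + 1)) + X * sternPoly (q + 1) := by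
      rw [show 8 * q + 5 = 2 * (4 * q + 2) + 1 from by ring,
        sternPoly_odd _ (by omega),
        show 4 * q + 2 = 2 * (2 * q + 1) from by ring,
        sternPoly_even _ (by omega),
        show 2 * (2 * q + 1) + 1 = 2 * (2 * q + 1) + 1 from rfl]
      rw [show (2 * (2 * q + 1)) + 1 = 2 * (2 * q + 1) + 1 from rfl]
      rw [sternPoly_odd (2 * q + 1) (by omega), h2q1,
        show 2 * q + 1 + 1 = 2 * (q + 1) from by ring, sternPoly_even _ (by omega)]
      ring
    have hSq : ∑ i ∈ Finset.range (m + 2), (X:ℤ[X]) ^ i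
        = (∑ i ∈ Finset.range (m + 1), X ^ i) + X ^ (m + 1) := by
      rw [show m + 2 = (m + 1) + 1 from rfl]; exact Finset.sum_range_succ _ _
    rw [hp, hfin, hBq, hBq1, hBm, hBm1, hSq]
    -- now pure algebra
    have hX1 : ((X : ℤ[X]) - 1) ≠ 0 := by
      simpa using X_sub_C_ne_zero (1 : ℤ)
    apply mul_left_cancel₀ (pow_ne_zero 2 hX1)
    have hS : (∑ i ∈ Finset.range (m + 1), (X:ℤ[X]) ^ i) * (X - 1) = X ^ (m + 1) - 1 :=
      geom_sum_mul X (m + 1)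
    have hS2 : ((X:ℤ[X]) - 1) ^ 2 * (∑ i ∈ Finset.range (m + 1), X ^ i) ^ 2
        = (X ^ (m + 1) - 1) ^ 2 := by
      linear_combination ((∑ i ∈ Finset.range (m + 1), (X:ℤ[X]) ^ i) * (X - 1)
        + (X ^ (m + 1) - 1)) * hS
    have hA := sumA m
    have hD := sumD m
    push_cast
    simp only [map_mul, map_add, map_sub, map_one, map_ofNat, map_natCast] at hA hD ⊢
    linear_combination (((1 + X) * ((2 + X) * X ^ (m + 1) + X)
        + X * (X ^ (m + 1) + X)) * (X - 1)) * hS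
      + ((1 + X) * (1 + 2 * X)) * hS2 - 2 * hA - (2 * X ^ (m + 2)) * hD
end
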